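/- arXiv:2004.00529 — 4 statements merged into one kernel-verified Lean document; each statement's English description precedes it below -/
import Mathlib

section
/- Let n ∈ [0, 7/2], ε > 0, and h(s) = s^{5-n}/(s^{4-n} + ε). Then for all s > 0, |h''(s)| ≤ 2^{-(7-2n)/(2(4-n))} · (4-n)(5-n) · ε^{1/(2(4-n))} · s^{-3/2}. -/
/-!
Write `p = 4 - n` and `x = s ^ p`, so that `h(s) = s ^ (p + 1) / (x + ε)` and
`h''(s) = p s ^ (p - 1) ε ((p + 1) ε - (p - 1) x) / (x + ε) ^ 3`; since `|p - 1| ≤ p + 1` this gives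
`|h''(s)| ≤ p (p + 1) ε s ^ (p - 1) / (x + ε) ^ 2`. Weighted AM-GM between `2 ε x` and `x ^ 2`, with
weight `c = (2p - 1) / (2p) ∈ [0, 1]`, gives `(x + ε) ^ 2 ≥ 2 ^ c ε ^ c x ^ (2 - c)`, and with this
choice of `c` the powers of `ε` and `s` combine to exactly `ε ^ (1 / (2p)) s ^ (-3/2)`.
-/

open Filter Topology

section

variable {p ε : ℝ}

theorem hasDerivAt_rpow_add_one_div_rpow_add (hε : 0 ≤ ε) {t : ℝ} (ht : 0 < t) :
    HasDerivAt (fun t : ℝ => t ^ (p + 1) / (t ^ p + ε))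
      (((t ^ p) ^ 2 + (p + 1) * ε * t ^ p) / (t ^ p + ε) ^ 2) t := by
  have hnum : HasDerivAt (fun t : ℝ => t ^ (p + 1)) ((p + 1) * t ^ p) t := by
    simpa using Real.hasDerivAt_rpow_const (p := p + 1) (Or.inl ht.ne')
  have hden : HasDerivAt (fun t : ℝ => t ^ p + ε) (p * t ^ (p - 1)) t :=
    (Real.hasDerivAt_rpow_const (Or.inl ht.ne')).add_const ε
  refine (hnum.div hden (by positivity)).congr_deriv ?_
  rw [Real.rpow_add ht, Real.rpow_sub ht, Real.rpow_one]
  field_simp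
  ring

theorem hasDerivAt_rpow_sq_add_mul_rpow_div_rpow_add_sq (hε : 0 ≤ ε) {t : ℝ} (ht : 0 < t) :
    HasDerivAt (fun t : ℝ => ((t ^ p) ^ 2 + (p + 1) * ε * t ^ p) / (t ^ p + ε) ^ 2)
      (p * t ^ (p - 1) * ε * ((p + 1) * ε - (p - 1) * t ^ p) / (t ^ p + ε) ^ 3) t := by
  have hpow : HasDerivAt (fun t : ℝ => t ^ p) (p * t ^ (p - 1)) t :=
    Real.hasDerivAt_rpow_const (Or.inl ht.ne')
  have hpos : 0 < t ^ p + ε := by positivity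
  refine ((((hpow.fun_pow 2).fun_add (hpow.const_mul ((p + 1) * ε))).div
    ((hpow.add_const ε).fun_pow 2) (pow_pos hpos 2).ne')).congr_deriv ?_
  field_simp
  ring

theorem deriv_deriv_rpow_add_one_div_rpow_add (hε : 0 ≤ ε) {s : ℝ} (hs : 0 < s) :
    deriv (deriv fun t : ℝ => t ^ (p + 1) / (t ^ p + ε)) s
      = p * s ^ (p - 1) * ε * ((p + 1) * ε - (p - 1) * s ^ p) / (s ^ p + ε) ^ 3 := by
  have hderiv : deriv (fun t : ℝ => t ^ (p + 1) / (t ^ p + ε))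
      =ᶠ[𝓝 s] fun t => ((t ^ p) ^ 2 + (p + 1) * ε * t ^ p) / (t ^ p + ε) ^ 2 :=
    eventually_of_mem (Ioi_mem_nhds hs) fun t ht =>
      (hasDerivAt_rpow_add_one_div_rpow_add hε ht).deriv
  rw [hderiv.deriv_eq, (hasDerivAt_rpow_sq_add_mul_rpow_div_rpow_add_sq hε hs).deriv]

theorem abs_deriv_deriv_rpow_add_one_div_rpow_add_le (hp : 0 ≤ p) (hε : 0 ≤ ε) {s : ℝ}
    (hs : 0 < s) :
    |deriv (deriv fun t : ℝ => t ^ (p + 1) / (t ^ p + ε)) s|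
      ≤ p * (p + 1) * (ε * s ^ (p - 1) / (s ^ p + ε) ^ 2) := by
  rw [deriv_deriv_rpow_add_one_div_rpow_add hε hs]
  set x := s ^ p
  have hx : 0 < x := by positivity
  have hfactor : |(p + 1) * ε - (p - 1) * x| ≤ (p + 1) * (x + ε) := by
    rw [abs_le]
    constructor <;> nlinarith
  rw [abs_div, abs_mul, abs_of_nonneg (by positivity : 0 ≤ p * s ^ (p - 1) * ε),
    abs_of_pos (by positivity : 0 < (x + ε) ^ 3), div_le_iff₀ (by positivity)]
  calc p * s ^ (p - 1) * ε * |(p + 1) * ε - (p - 1) * x|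
      ≤ p * s ^ (p - 1) * ε * ((p + 1) * (x + ε)) := by gcongr
    _ = p * (p + 1) * (ε * s ^ (p - 1) / (x + ε) ^ 2) * (x + ε) ^ 3 := by
      field_simp

end

theorem two_rpow_mul_rpow_mul_rpow_two_sub_le_add_sq {c x ε : ℝ} (hc₀ : 0 ≤ c) (hc₁ : c ≤ 1)
    (hx : 0 < x) (hε : 0 ≤ ε) :
    2 ^ c * ε ^ c * x ^ (2 - c) ≤ (x + ε) ^ 2 :=
  calc 2 ^ c * ε ^ c * x ^ (2 - c) = (2 * ε * x) ^ c * (x ^ 2) ^ (1 - c) := by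
        have hsplit : x ^ (2 - c) = x ^ c * (x ^ 2) ^ (1 - c) := by
          rw [← Real.rpow_natCast x 2, ← Real.rpow_mul hx.le, ← Real.rpow_add hx]
          norm_num [two_mul]
          ring_nf
        rw [hsplit, Real.mul_rpow (by positivity) hx.le, Real.mul_rpow zero_le_two hε]
        ring
    _ ≤ c * (2 * ε * x) + (1 - c) * x ^ 2 :=
        Real.geom_mean_le_arith_mean2_weighted hc₀ (by linarith) (by positivity)
          (by positivity) (by ring)
    _ ≤ (x + ε) ^ 2 := by nlinarith [mul_nonneg hε hx.le]

theorem mul_rpow_sub_one_div_rpow_add_sq_le {p ε s : ℝ} (hp : 1 / 2 ≤ p) (hε : 0 < ε)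
    (hs : 0 < s) :
    ε * s ^ (p - 1) / (s ^ p + ε) ^ 2
      ≤ 2 ^ (-((2 * p - 1) / (2 * p))) * ε ^ (1 / (2 * p)) * s ^ (-(3 : ℝ) / 2) := by
  set c := (2 * p - 1) / (2 * p) with hc
  have hc₀ : 0 ≤ c := div_nonneg (by linarith) (by linarith)
  have hc₁ : c ≤ 1 := (div_le_one (by linarith)).2 (by linarith)
  have hAMGM := two_rpow_mul_rpow_mul_rpow_two_sub_le_add_sq hc₀ hc₁ (Real.rpow_pos_of_pos hs p)
    hε.le
  have htwo : (2 : ℝ) ^ (-c) * 2 ^ c = 1 := by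
    rw [← Real.rpow_add two_pos]; norm_num
  have hεexp : ε ^ (1 / (2 * p)) * ε ^ c = ε := by
    rw [← Real.rpow_add hε, hc, ← add_div]
    convert Real.rpow_one ε using 2
    field_simp
    ring
  have hsexp : s ^ (-(3 : ℝ) / 2) * (s ^ p) ^ (2 - c) = s ^ (p - 1) := by
    rw [← Real.rpow_mul hs.le, ← Real.rpow_add hs, hc]
    congr 1
    field_simp
    ring
  rw [div_le_iff₀ (by positivity)]
  calc ε * s ^ (p - 1)
      = (2 ^ (-c) * 2 ^ c) * (ε ^ (1 / (2 * p)) * ε ^ c)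
          * (s ^ (-(3 : ℝ) / 2) * (s ^ p) ^ (2 - c)) := by
        rw [htwo, hεexp, hsexp, one_mul]
    _ = 2 ^ (-c) * ε ^ (1 / (2 * p)) * s ^ (-(3 : ℝ) / 2) * (2 ^ c * ε ^ c * (s ^ p) ^ (2 - c)) := by
        ring
    _ ≤ _ := mul_le_mul_of_nonneg_left hAMGM (by positivity)

/-- For `n ∈ [0,7/2]`, `ε > 0`, and `h(s) = s^{5-n}/(s^{4-n}+ε)`:
`|h''(s)| ≤ 2^{-(7-2n)/(2(4-n))}(4-n)(5-n) ε^{1/(2(4-n))} s^{-3/2}` for `s > 0`. -/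
theorem stmt_5 (n ε : ℝ) (hn : n ∈ Set.Icc (0:ℝ) (7/2)) (hε : 0 < ε) :
    ∀ s : ℝ, 0 < s →
      |deriv (deriv (fun t : ℝ => t ^ (5 - n) / (t ^ (4 - n) + ε))) s|
        ≤ (2:ℝ) ^ (-((7 - 2*n) / (2 * (4 - n)))) * ((4 - n) * (5 - n))
            * ε ^ (1 / (2 * (4 - n))) * s ^ (-(3:ℝ)/2) := by
  intro s hs
  rw [show 5 - n = (4 - n) + 1 by ring, show 7 - 2 * n = 2 * (4 - n) - 1 by ring]
  have hp : 1 / 2 ≤ 4 - n := by linarith [hn.2]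
  calc _ ≤ (4 - n) * (4 - n + 1) * (ε * s ^ (4 - n - 1) / (s ^ (4 - n) + ε) ^ 2) :=
        abs_deriv_deriv_rpow_add_one_div_rpow_add_le (by linarith) hε.le hs
    _ ≤ (4 - n) * (4 - n + 1) * (2 ^ (-((2 * (4 - n) - 1) / (2 * (4 - n))))
          * ε ^ (1 / (2 * (4 - n))) * s ^ (-(3 : ℝ) / 2)) := by
        gcongr
        exact mul_rpow_sub_one_div_rpow_add_sq_le hp hε hs
    _ = _ := by ring
end

section
/- Let Ω ⊂ ℝ be a bounded open interval, p > 0, q > 0, and let φ ∈ C¹(closure Ω) be positive on closure Ω. Then ∫_Ω φ^{-p} ≤ q^{2p/q} |Ω|^{(p+q)/q} (∫_Ω φ^{-q-2} (φ')²)^{p/q} + 2^{2p/q} |Ω|^{p+1} (∫_Ω φ)^{-p}. -/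
/-!
Put `ψ = φ ^ (-q/2)`. The fundamental theorem of calculus and Cauchy–Schwarz give
`ψ x ≤ ψ x₀ + (q/2) (|Ω| ∫ φ^{-q-2} φ'²)^{1/2}` for all `x, x₀`, and raising this to the power
`2p/q` turns `ψ` into `φ^{-p}`. Choosing `x₀` where `φ` is at least its mean bounds
`φ x₀ ^ (-p)` by `|Ω|^p (∫ φ)^{-p}`, and integrating over `Ω` gives the inequality.
-/

open Set MeasureTheory Real

theorem add_rpow_le_two_rpow_mul_add_rpow {A B r : ℝ} (hA : 0 ≤ A) (hB : 0 ≤ B)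
    (hr : 0 ≤ r) :
    (A + B) ^ r ≤ 2 ^ r * (A ^ r + B ^ r) := by
  have hmax : max A B ^ r ≤ A ^ r + B ^ r := by
    rcases le_total A B with h | h
    · rw [max_eq_right h]; linarith [rpow_nonneg hA r]
    · rw [max_eq_left h]; linarith [rpow_nonneg hB r]
  calc (A + B) ^ r ≤ (2 * max A B) ^ r := by
        gcongr; linarith [le_max_left A B, le_max_right A B]
    _ = 2 ^ r * max A B ^ r := mul_rpow zero_le_two (le_max_of_le_left hA)
    _ ≤ 2 ^ r * (A ^ r + B ^ r) := by gcongr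

theorem sq_integral_le_measureReal_univ_mul_integral_sq {α : Type*} [MeasurableSpace α]
    {μ : Measure α} [IsFiniteMeasure μ] {f : α → ℝ} (hf : MemLp f 2 μ) :
    (∫ x, f x ∂μ) ^ 2 ≤ μ.real univ * ∫ x, f x ^ 2 ∂μ := by
  have hf_abs : MemLp (fun x => |f x|) (ENNReal.ofReal 2) μ := by
    rw [ENNReal.ofReal_ofNat]; exact hf.abs
  have hHolder := integral_mul_le_Lp_mul_Lq_of_nonneg Real.HolderConjugate.two_two
    (Filter.Eventually.of_forall fun _ => zero_le_one)
    (Filter.Eventually.of_forall fun x => abs_nonneg (f x)) (memLp_const 1) hf_abs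
  simp only [one_mul, integral_const, smul_eq_mul, rpow_two, sq_abs, one_pow, mul_one] at hHolder
  calc (∫ x, f x ∂μ) ^ 2 ≤ (∫ x, |f x| ∂μ) ^ 2 := by
        rw [← sq_abs]; gcongr; exact abs_integral_le_integral_abs
    _ ≤ (μ.real univ ^ (1 / 2 : ℝ) * (∫ x, f x ^ 2 ∂μ) ^ (1 / 2 : ℝ)) ^ 2 :=
        pow_le_pow_left₀ (integral_nonneg fun x => abs_nonneg (f x)) hHolder 2
    _ = μ.real univ * ∫ x, f x ^ 2 ∂μ := by
        rw [mul_pow, ← sqrt_eq_rpow, ← sqrt_eq_rpow, sq_sqrt measureReal_nonneg,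
          sq_sqrt (integral_nonneg fun x => sq_nonneg _)]

theorem abs_sub_le_setIntegral_Ioo_abs_of_hasDerivAt {f f' : ℝ → ℝ} {a b x y : ℝ}
    (hf : ContinuousOn f (Icc a b)) (hderiv : ∀ t ∈ Ioo a b, HasDerivAt f (f' t) t)
    (hf' : IntegrableOn f' (Icc a b)) (hx : x ∈ Icc a b) (hy : y ∈ Icc a b) :
    |f x - f y| ≤ ∫ t in Ioo a b, |f' t| := by
  wlog hyx : y ≤ x generalizing x y
  · rw [abs_sub_comm]; exact this hy hx (le_of_not_ge hyx)
  have hsub : Icc y x ⊆ Icc a b := Icc_subset_Icc hy.1 hx.2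
  have hFTC : ∫ t in y..x, f' t = f x - f y :=
    intervalIntegral.integral_eq_sub_of_hasDerivAt_of_le hyx (hf.mono hsub)
      (fun t ht => hderiv t ⟨hy.1.trans_lt ht.1, ht.2.trans_le hx.2⟩)
      ((intervalIntegrable_iff_integrableOn_Icc_of_le hyx).2 (hf'.mono_set hsub))
  calc |f x - f y| = |∫ t in Ioc y x, f' t| := by
        rw [← hFTC, intervalIntegral.integral_of_le hyx]
    _ ≤ ∫ t in Ioc y x, |f' t| := abs_integral_le_integral_abs
    _ ≤ ∫ t in Ioc a b, |f' t| :=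
        setIntegral_mono_set (hf'.mono_set Ioc_subset_Icc_self).abs
          (Filter.Eventually.of_forall fun _ => abs_nonneg _)
          (Ioc_subset_Ioc hy.1 hx.2).eventuallyLE
    _ = ∫ t in Ioo a b, |f' t| := integral_Ioc_eq_integral_Ioo

theorem exists_mem_Ioo_rpow_neg_le {φ : ℝ → ℝ} {a b p : ℝ} (hab : a < b)
    (hφ : IntegrableOn φ (Ioo a b)) (hpos : ∀ x ∈ Ioo a b, 0 < φ x) (hp : 0 ≤ p) :
    ∃ x₀ ∈ Ioo a b, φ x₀ ^ (-p) ≤ (b - a) ^ p * (∫ x in Ioo a b, φ x) ^ (-p) := by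
  have hba : 0 < b - a := sub_pos.2 hab
  have hI : 0 < ∫ x in Ioo a b, φ x := by
    rw [← integral_Ioc_eq_integral_Ioo, ← intervalIntegral.integral_of_le hab.le]
    exact intervalIntegral.intervalIntegral_pos_of_pos_on
      ((intervalIntegrable_iff_integrableOn_Ioo_of_le hab.le).2 hφ) hpos hab
  obtain ⟨x₀, hx₀, hmean⟩ := exists_setAverage_le (by simpa using hab)
    measure_Ioo_lt_top.ne hφ
  rw [setAverage_eq, volume_real_Ioo_of_le hab.le, smul_eq_mul, inv_mul_eq_div] at hmean
  refine ⟨x₀, hx₀, ?_⟩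
  calc φ x₀ ^ (-p) ≤ ((∫ x in Ioo a b, φ x) / (b - a)) ^ (-p) :=
        rpow_le_rpow_of_nonpos (by positivity) hmean (neg_nonpos.2 hp)
    _ = (b - a) ^ p * (∫ x in Ioo a b, φ x) ^ (-p) := by
        rw [div_rpow hI.le hba.le, rpow_neg hba.le, div_inv_eq_mul, mul_comm]

section

variable {φ g : ℝ → ℝ} {a b q : ℝ}

theorem rpow_neg_half_sub_le
    (hφ : ContinuousOn φ (Icc a b)) (hg : ContinuousOn g (Icc a b))
    (hderiv : ∀ x ∈ Ioo a b, HasDerivAt φ (g x) x) (hpos : ∀ x ∈ Icc a b, 0 < φ x)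
    (hq : 0 ≤ q) {x y : ℝ} (hx : x ∈ Icc a b) (hy : y ∈ Icc a b) :
    φ x ^ (-(q / 2)) - φ y ^ (-(q / 2))
      ≤ q / 2 * √((b - a) * ∫ t in Ioo a b, φ t ^ (-q - 2) * g t ^ 2) := by
  have hab : a ≤ b := hx.1.trans hx.2
  have hφ_rpow (s : ℝ) : ContinuousOn (fun t => φ t ^ s) (Icc a b) :=
    hφ.rpow_const fun t ht => Or.inl (hpos t ht).ne'
  set u : ℝ → ℝ := fun t => φ t ^ (-(q / 2) - 1) * |g t|
  have hu : ContinuousOn u (Icc a b) := (hφ_rpow _).mul hg.abs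
  have hderiv_rpow : ∀ t ∈ Ioo a b, HasDerivAt (fun t => φ t ^ (-(q / 2)))
      (g t * (-(q / 2)) * φ t ^ (-(q / 2) - 1)) t := fun t ht =>
    (hderiv t ht).rpow_const (Or.inl (hpos t (Ioo_subset_Icc_self ht)).ne')
  have habs : ∀ t ∈ Ioo a b, |g t * (-(q / 2)) * φ t ^ (-(q / 2) - 1)| = q / 2 * u t := by
    intro t ht
    have := hpos t (Ioo_subset_Icc_self ht)
    rw [abs_mul, abs_mul, abs_neg, abs_of_nonneg (by positivity : 0 ≤ q / 2),
      abs_of_pos (by positivity : 0 < φ t ^ (-(q / 2) - 1))]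
    ring
  have hsq : ∀ t ∈ Ioo a b, u t ^ 2 = φ t ^ (-q - 2) * g t ^ 2 := by
    intro t ht
    rw [mul_pow, sq_abs, ← rpow_natCast, ← rpow_mul (hpos t (Ioo_subset_Icc_self ht)).le]
    congr 2
    push_cast
    ring
  have hu_memLp : MemLp u 2 (volume.restrict (Ioo a b)) :=
    (memLp_two_iff_integrable_sq ((hu.mono Ioo_subset_Icc_self).aestronglyMeasurable
      measurableSet_Ioo)).2 (((hu.pow 2).integrableOn_Icc).mono_set Ioo_subset_Icc_self)
  have hCS := sq_integral_le_measureReal_univ_mul_integral_sq hu_memLp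
  rw [measureReal_restrict_apply_univ, volume_real_Ioo_of_le hab,
    setIntegral_congr_fun measurableSet_Ioo hsq] at hCS
  calc φ x ^ (-(q / 2)) - φ y ^ (-(q / 2))
      ≤ ∫ t in Ioo a b, |g t * (-(q / 2)) * φ t ^ (-(q / 2) - 1)| :=
        (le_abs_self _).trans <| abs_sub_le_setIntegral_Ioo_abs_of_hasDerivAt (hφ_rpow _)
          hderiv_rpow ((hg.mul continuousOn_const).mul (hφ_rpow _)).integrableOn_Icc hx hy
    _ = q / 2 * ∫ t in Ioo a b, u t := by
        rw [setIntegral_congr_fun measurableSet_Ioo habs, integral_const_mul]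
    _ ≤ q / 2 * √((b - a) * ∫ t in Ioo a b, φ t ^ (-q - 2) * g t ^ 2) := by
        gcongr
        exact (le_abs_self _).trans (abs_le_sqrt hCS)

theorem rpow_neg_le_two_rpow_mul
    (hφ : ContinuousOn φ (Icc a b)) (hg : ContinuousOn g (Icc a b))
    (hderiv : ∀ x ∈ Ioo a b, HasDerivAt φ (g x) x) (hpos : ∀ x ∈ Icc a b, 0 < φ x)
    {p : ℝ} (hp : 0 ≤ p) (hq : 0 < q) {x y : ℝ} (hx : x ∈ Icc a b) (hy : y ∈ Icc a b) :
    φ x ^ (-p) ≤ 2 ^ (2 * p / q) * (φ y ^ (-p) + (q / 2) ^ (2 * p / q)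
      * ((b - a) ^ (p / q) * (∫ t in Ioo a b, φ t ^ (-q - 2) * g t ^ 2) ^ (p / q))) := by
  set J := ∫ t in Ioo a b, φ t ^ (-q - 2) * g t ^ 2
  have hba : 0 ≤ b - a := sub_nonneg.2 (hx.1.trans hx.2)
  have hJ : 0 ≤ J := setIntegral_nonneg measurableSet_Ioo fun t ht => by
    have := hpos t (Ioo_subset_Icc_self ht)
    positivity
  have hr : 0 ≤ 2 * p / q := by positivity
  have hpow (z : ℝ) (hz : 0 < z) : (z ^ (-(q / 2))) ^ (2 * p / q) = z ^ (-p) := by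
    rw [← rpow_mul hz.le]
    field_simp
  have hψy : 0 ≤ φ y ^ (-(q / 2)) := (rpow_pos_of_pos (hpos y hy) _).le
  have hL : 0 ≤ q / 2 * √((b - a) * J) := by positivity
  calc φ x ^ (-p) = (φ x ^ (-(q / 2))) ^ (2 * p / q) := (hpow _ (hpos x hx)).symm
    _ ≤ (φ y ^ (-(q / 2)) + q / 2 * √((b - a) * J)) ^ (2 * p / q) :=
        rpow_le_rpow (rpow_pos_of_pos (hpos x hx) _).le
          (by linarith [rpow_neg_half_sub_le hφ hg hderiv hpos hq.le hx hy]) hr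
    _ ≤ 2 ^ (2 * p / q)
          * ((φ y ^ (-(q / 2))) ^ (2 * p / q) + (q / 2 * √((b - a) * J)) ^ (2 * p / q)) :=
        add_rpow_le_two_rpow_mul_add_rpow hψy hL hr
    _ = 2 ^ (2 * p / q)
          * (φ y ^ (-p) + (q / 2) ^ (2 * p / q) * ((b - a) ^ (p / q) * J ^ (p / q))) := by
        rw [hpow _ (hpos y hy), mul_rpow (by positivity) (by positivity), sqrt_eq_rpow,
          ← rpow_mul (by positivity), mul_rpow hba hJ]
        congr 4 <;> field_simp

theorem setIntegral_Ioo_rpow_neg_le (hab : a < b) {p : ℝ} (hp : 0 ≤ p) (hq : 0 < q)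
    (hφ : ContinuousOn φ (Icc a b)) (hg : ContinuousOn g (Icc a b))
    (hderiv : ∀ x ∈ Ioo a b, HasDerivAt φ (g x) x) (hpos : ∀ x ∈ Icc a b, 0 < φ x) :
    ∫ x in Ioo a b, φ x ^ (-p)
      ≤ q ^ (2 * p / q) * (b - a) ^ ((p + q) / q)
          * (∫ x in Ioo a b, φ x ^ (-q - 2) * g x ^ 2) ^ (p / q)
        + 2 ^ (2 * p / q) * (b - a) ^ (p + 1) * (∫ x in Ioo a b, φ x) ^ (-p) := by
  obtain ⟨x₀, hx₀, hφx₀⟩ := exists_mem_Ioo_rpow_neg_le hab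
    (hφ.integrableOn_Icc.mono_set Ioo_subset_Icc_self)
    (fun x hx => hpos x (Ioo_subset_Icc_self hx)) hp
  set I := ∫ x in Ioo a b, φ x
  set J := ∫ x in Ioo a b, φ x ^ (-q - 2) * g x ^ 2
  set C := 2 ^ (2 * p / q) * ((b - a) ^ p * I ^ (-p) + (q / 2) ^ (2 * p / q)
      * ((b - a) ^ (p / q) * J ^ (p / q)))
  have hpt (x : ℝ) (hx : x ∈ Ioo a b) : φ x ^ (-p) ≤ C :=
    (rpow_neg_le_two_rpow_mul hφ hg hderiv hpos hp hq
      (Ioo_subset_Icc_self hx) (Ioo_subset_Icc_self hx₀)).trans (by unfold C; gcongr)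
  have hba : 0 < b - a := sub_pos.2 hab
  calc ∫ x in Ioo a b, φ x ^ (-p) ≤ ∫ x in Ioo a b, C :=
        setIntegral_mono_on ((hφ.rpow_const fun x hx =>
          Or.inl (hpos x hx).ne').integrableOn_Icc.mono_set Ioo_subset_Icc_self)
          (integrableOn_const measure_Ioo_lt_top.ne) measurableSet_Ioo hpt
    _ = (b - a) * C := by rw [setIntegral_const, volume_real_Ioo_of_le hab.le, smul_eq_mul]
    _ = _ := by
        have h2q : (2 : ℝ) ^ (2 * p / q) * (q / 2) ^ (2 * p / q) = q ^ (2 * p / q) := by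
          rw [← mul_rpow zero_le_two (by positivity)]
          field_simp
        have hpq : (b - a) ^ ((p + q) / q) = (b - a) * (b - a) ^ (p / q) := by
          rw [add_div, div_self hq.ne', rpow_add hba, rpow_one, mul_comm]
        rw [← h2q, hpq, rpow_add hba, rpow_one]
        ring

end

/-- Interpolation: for a positive `C¹` function `φ` on a bounded interval and `p, q > 0`,
`∫ φ^{-p} ≤ q^{2p/q}|Ω|^{(p+q)/q}(∫ φ^{-q-2}(φ')²)^{p/q} + 2^{2p/q}|Ω|^{p+1}(∫ φ)^{-p}`. -/
theorem stmt_7 (a b : ℝ) (hab : a < b) (p q : ℝ) (hp : 0 < p) (hq : 0 < q)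
    (φ : ℝ → ℝ) (hφ : ContDiffOn ℝ 1 φ (Set.Icc a b))
    (hpos : ∀ x ∈ Set.Icc a b, 0 < φ x) :
    ∫ x in Set.Ioo a b, φ x ^ (-p)
      ≤ q ^ (2*p/q) * (b - a) ^ ((p + q)/q)
          * (∫ x in Set.Ioo a b, φ x ^ (-q - 2) * (deriv φ x) ^ 2) ^ (p/q)
        + 2 ^ (2*p/q) * (b - a) ^ (p + 1) * (∫ x in Set.Ioo a b, φ x) ^ (-p) := by
  have hderiv (x : ℝ) (hx : x ∈ Ioo a b) : HasDerivAt φ (derivWithin φ (Icc a b) x) x :=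
    ((hφ.differentiableOn one_ne_zero x (Ioo_subset_Icc_self hx)).hasDerivWithinAt).hasDerivAt
      (Icc_mem_nhds hx.1 hx.2)
  have hJ : ∫ x in Ioo a b, φ x ^ (-q - 2) * deriv φ x ^ 2
      = ∫ x in Ioo a b, φ x ^ (-q - 2) * derivWithin φ (Icc a b) x ^ 2 :=
    setIntegral_congr_fun measurableSet_Ioo fun x hx => by
      rw [derivWithin_of_mem_nhds (Icc_mem_nhds hx.1 hx.2)]
  rw [hJ]
  exact setIntegral_Ioo_rpow_neg_le hab hp.le hq hφ.continuousOn
    (hφ.continuousOn_derivWithin (uniqueDiffOn_Icc hab) le_rfl) hderiv hpos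
end

section
/- Let Ω ⊂ ℝ be a bounded open interval and φ ∈ C¹(closure Ω) positive on closure Ω. Then −∫_Ω ln φ ≤ |Ω|^{3/2} (∫_Ω (φ')²/φ²)^{1/2} − |Ω| ln(∫_Ω φ) + |Ω| ln |Ω|. -/
open MeasureTheory Set

/-! Write `ψ = log φ` and pick `x₀` where `φ` is at least its mean, so that
`log ∫ φ ≤ log |Ω| + ψ x₀`. The fundamental theorem of calculus bounds `ψ x₀ - ψ x` by `∫ |ψ'|`
for every `x ∈ Ω`, and Cauchy–Schwarz bounds `∫ |ψ'|` by `|Ω| ^ (1/2) * (∫ ψ' ^ 2) ^ (1/2)`;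
integrating the first bound over `Ω` and inserting the other two gives the inequality. -/

theorem integral_abs_le_measureReal_rpow_mul_integral_sq_rpow {α : Type*} [MeasurableSpace α]
    {μ : Measure α} [IsFiniteMeasure μ] {g : α → ℝ} (hg : MemLp g 2 μ) :
    ∫ x, |g x| ∂μ ≤ μ.real univ ^ (1 / 2 : ℝ) * (∫ x, g x ^ 2 ∂μ) ^ (1 / 2 : ℝ) := by
  have hCS := integral_mul_le_Lp_mul_Lq_of_nonneg (p := 2) (q := 2) .two_two
    (.of_forall fun x => abs_nonneg (g x)) (.of_forall fun _ => zero_le_one)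
    (by simpa [Real.norm_eq_abs] using hg.norm) (memLp_const (1 : ℝ))
  simp only [mul_one, integral_const, smul_eq_mul, Real.rpow_two, sq_abs, one_pow] at hCS
  linarith

section
variable {f f' : ℝ → ℝ} {a b : ℝ}

theorem abs_sub_le_setIntegral_abs_deriv (hf : ContinuousOn f (Icc a b))
    (hderiv : ∀ t ∈ Ioo a b, HasDerivAt f (f' t) t) (hint : IntegrableOn f' (Ioo a b))
    {x y : ℝ} (hx : x ∈ Icc a b) (hy : y ∈ Icc a b) :
    |f y - f x| ≤ ∫ t in Ioo a b, |f' t| := by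
  wlog hxy : x ≤ y generalizing x y
  · rw [abs_sub_comm]; exact this hy hx (le_of_not_ge hxy)
  have hsub : Ioc x y ⊆ Ioc a b := Ioc_subset_Ioc hx.1 hy.2
  have hint' : IntegrableOn f' (Ioc a b) := (integrableOn_Ioc_iff_integrableOn_Ioo).2 hint
  have hFTC : f y - f x = ∫ t in x..y, f' t :=
    (intervalIntegral.integral_eq_sub_of_hasDerivAt_of_le hxy
      (hf.mono (Icc_subset_Icc hx.1 hy.2))
      (fun t ht => hderiv t (Ioo_subset_Ioo hx.1 hy.2 ht))
      ((intervalIntegrable_iff_integrableOn_Ioc_of_le hxy).2 (hint'.mono_set hsub))).symm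
  calc |f y - f x| ≤ ∫ t in x..y, |f' t| := hFTC ▸ intervalIntegral.abs_integral_le_integral_abs hxy
    _ = ∫ t in Ioc x y, |f' t| := intervalIntegral.integral_of_le hxy
    _ ≤ ∫ t in Ioc a b, |f' t| :=
      setIntegral_mono_set hint'.abs (.of_forall fun t => abs_nonneg _) hsub.eventuallyLE
    _ = ∫ t in Ioo a b, |f' t| := integral_Ioc_eq_integral_Ioo

theorem mul_sub_setIntegral_le_mul_setIntegral_abs_deriv (hab : a ≤ b)
    (hf : ContinuousOn f (Icc a b)) (hderiv : ∀ t ∈ Ioo a b, HasDerivAt f (f' t) t)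
    (hint : IntegrableOn f' (Ioo a b)) {x₀ : ℝ} (hx₀ : x₀ ∈ Icc a b) :
    (b - a) * f x₀ - ∫ x in Ioo a b, f x ≤ (b - a) * ∫ t in Ioo a b, |f' t| := by
  have hfint : IntegrableOn f (Ioo a b) := hf.integrableOn_Icc.mono_set Ioo_subset_Icc_self
  have hconst (c : ℝ) : IntegrableOn (fun _ => c) (Ioo a b) := integrableOn_const (by simp)
  have hmono : ∫ x in Ioo a b, (f x₀ - f x) ≤ ∫ _ in Ioo a b, ∫ t in Ioo a b, |f' t| :=
    setIntegral_mono_on ((hconst _).sub hfint) (hconst _) measurableSet_Ioo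
      fun x hx => (le_abs_self _).trans
        (abs_sub_le_setIntegral_abs_deriv hf hderiv hint (Ioo_subset_Icc_self hx) hx₀)
  rwa [integral_sub (hconst _) hfint, setIntegral_const, setIntegral_const,
    Real.volume_real_Ioo_of_le hab, smul_eq_mul, smul_eq_mul] at hmono
end

section
variable {φ : ℝ → ℝ} {a b : ℝ}

theorem ContDiffOn.hasDerivAt_log_logDeriv (hφ : ContDiffOn ℝ 1 φ (Icc a b))
    (hφ0 : ∀ x ∈ Icc a b, φ x ≠ 0) {t : ℝ} (ht : t ∈ Ioo a b) :
    HasDerivAt (fun x => Real.log (φ x)) (logDeriv φ t) t :=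
  (((hφ.differentiableOn one_ne_zero) t (Ioo_subset_Icc_self ht)).differentiableAt
    (Icc_mem_nhds ht.1 ht.2)).hasDerivAt.log (hφ0 t (Ioo_subset_Icc_self ht))

theorem ContDiffOn.memLp_logDeriv (hab : a < b) (hφ : ContDiffOn ℝ 1 φ (Icc a b))
    (hφ0 : ∀ x ∈ Icc a b, φ x ≠ 0) (p : ENNReal) :
    MemLp (logDeriv φ) p (volume.restrict (Ioo a b)) := by
  set G : ℝ → ℝ := fun x => derivWithin φ (Icc a b) x / φ x
  have hG : ContinuousOn G (Icc a b) :=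
    (hφ.continuousOn_derivWithin (uniqueDiffOn_Icc hab) le_rfl).div hφ.continuousOn hφ0
  have hGeq : EqOn (logDeriv φ) G (Ioo a b) := fun t ht => by
    simp only [G, logDeriv_apply, derivWithin_of_mem_nhds (Icc_mem_nhds ht.1 ht.2)]
  obtain ⟨C, hC⟩ := isCompact_Icc.exists_bound_of_continuousOn hG
  refine MemLp.of_bound (((hG.mono Ioo_subset_Icc_self).congr hGeq).aestronglyMeasurable
    measurableSet_Ioo) C ((ae_restrict_iff' measurableSet_Ioo).2 (.of_forall fun t ht => ?_))
  rw [hGeq ht]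
  exact hC t (Ioo_subset_Icc_self ht)
end

/-- For a positive `C¹` function `φ` on a bounded interval:
`-∫ ln φ ≤ |Ω|^{3/2}(∫ (φ')²/φ²)^{1/2} - |Ω| ln(∫ φ) + |Ω| ln |Ω|`. -/
theorem stmt_8 (a b : ℝ) (hab : a < b) (φ : ℝ → ℝ)
    (hφ : ContDiffOn ℝ 1 φ (Set.Icc a b))
    (hpos : ∀ x ∈ Set.Icc a b, 0 < φ x) :
    -∫ x in Set.Ioo a b, Real.log (φ x)
      ≤ (b - a) ^ ((3:ℝ)/2)
            * (∫ x in Set.Ioo a b, (deriv φ x) ^ 2 / (φ x) ^ 2) ^ ((1:ℝ)/2)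
        - (b - a) * Real.log (∫ x in Set.Ioo a b, φ x)
        + (b - a) * Real.log (b - a) := by
  have hL : 0 < b - a := sub_pos.2 hab
  have hvol : volume.real (Ioo a b) = b - a := Real.volume_real_Ioo_of_le hab.le
  have hφ0 : ∀ x ∈ Icc a b, φ x ≠ 0 := fun x hx => (hpos x hx).ne'
  have hL2 := hφ.memLp_logDeriv hab hφ0 2
  have hφint : IntegrableOn φ (Ioo a b) :=
    hφ.continuousOn.integrableOn_Icc.mono_set Ioo_subset_Icc_self
  obtain ⟨x₀, hx₀, havg⟩ := exists_setAverage_le (by simp [hab]) (by simp) hφint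
  have hI_pos : 0 < ∫ x in Ioo a b, φ x := by
    rw [← integral_Ioc_eq_integral_Ioo, ← intervalIntegral.integral_of_le hab.le]
    exact intervalIntegral.intervalIntegral_pos_of_pos_on
      (hφ.continuousOn.intervalIntegrable_of_Icc hab.le)
      (fun x hx => hpos x (Ioo_subset_Icc_self hx)) hab
  have hI_le : ∫ x in Ioo a b, φ x ≤ (b - a) * φ x₀ := by
    rw [setAverage_eq, hvol, smul_eq_mul, inv_mul_le_iff₀ hL] at havg
    exact havg
  have hosc := mul_sub_setIntegral_le_mul_setIntegral_abs_deriv hab.le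
    (hφ.continuousOn.log hφ0) (fun t ht => hφ.hasDerivAt_log_logDeriv hφ0 ht)
    (hL2.integrable one_le_two) (Ioo_subset_Icc_self hx₀)
  have hCS := integral_abs_le_measureReal_rpow_mul_integral_sq_rpow hL2
  have hsq : ∫ x in Ioo a b, logDeriv φ x ^ 2 = ∫ x in Ioo a b, deriv φ x ^ 2 / φ x ^ 2 := by
    simp only [logDeriv_apply, div_pow]
  rw [measureReal_restrict_apply_univ, hvol, hsq] at hCS
  have hlogI : Real.log (∫ x in Ioo a b, φ x) ≤ Real.log (b - a) + Real.log (φ x₀) := by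
    rw [← Real.log_mul hL.ne' (hpos x₀ (Ioo_subset_Icc_self hx₀)).ne']
    exact Real.log_le_log hI_pos hI_le
  have hrpow : (b - a) ^ ((3:ℝ)/2) = (b - a) * (b - a) ^ ((1:ℝ)/2) := by
    rw [show (3:ℝ)/2 = 1 + 1/2 by norm_num, Real.rpow_add hL, Real.rpow_one]
  rw [hrpow]
  linarith [mul_le_mul_of_nonneg_left hCS hL.le, mul_le_mul_of_nonneg_left hlogI hL.le]
end

section
/- Let t₀ ∈ ℝ, T > t₀, a > 0, b > 0, β > 1, and let y: [t₀,T) → ℝ be continuous, nonnegative, differentiable on (t₀,T), and satisfy y'(t) + a y(t)^β ≤ b for all t ∈ (t₀,T). Then y(t) ≤ ((β-1) a (t-t₀))^{-1/(β-1)} + (b/a)^{1/β} for all t ∈ (t₀,T). -/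
open Set

/-- Strict superadditivity of `rpow` with exponent `> 1` on positives. -/
lemma rpow_add_lt_of_one_lt {x K β : ℝ} (hx : 0 < x) (hK : 0 < K) (hβ : 1 < β) :
    x ^ β + K ^ β < (x + K) ^ β := by
  have hβ1 : 0 < β - 1 := by linarith
  have hxK : 0 < x + K := by linarith
  have h1 : (x + K) ^ β = (x + K) ^ (β - 1) * x + (x + K) ^ (β - 1) * K := by
    have : (x + K) ^ β = (x + K) ^ (β - 1) * (x + K) ^ (1 : ℝ) := by
      rw [← Real.rpow_add hxK]; ring_nf
    rw [this, Real.rpow_one]; ring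
  have h2 : x ^ (β - 1) * x < (x + K) ^ (β - 1) * x :=
    mul_lt_mul_of_pos_right (Real.rpow_lt_rpow hx.le (by linarith) hβ1) hx
  have h3 : K ^ (β - 1) * K < (x + K) ^ (β - 1) * K :=
    mul_lt_mul_of_pos_right (Real.rpow_lt_rpow hK.le (by linarith) hβ1) hK
  have hx' : x ^ (β - 1) * x = x ^ β := by
    rw [show x ^ (β - 1) * x = x ^ (β - 1) * x ^ (1 : ℝ) by rw [Real.rpow_one],
      ← Real.rpow_add hx]
    norm_num
  have hK' : K ^ (β - 1) * K = K ^ β := by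
    rw [show K ^ (β - 1) * K = K ^ (β - 1) * K ^ (1 : ℝ) by rw [Real.rpow_one],
      ← Real.rpow_add hK]
    norm_num
  rw [h1]; rw [hx'] at h2; rw [hK'] at h3; linarith

/-- ODE comparison: if `y ≥ 0` is continuous on `[t₀,T)`, differentiable on `(t₀,T)`, and
`y' + a y^β ≤ b`, then `y(t) ≤ ((β-1)a(t-t₀))^{-1/(β-1)} + (b/a)^{1/β}` on `(t₀,T)`. -/
theorem stmt_9 (t₀ T a b β : ℝ) (hT : t₀ < T) (ha : 0 < a) (hb : 0 < b) (hβ : 1 < β)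
    (y : ℝ → ℝ) (hcont : ContinuousOn y (Set.Ico t₀ T))
    (hnn : ∀ t ∈ Set.Ico t₀ T, 0 ≤ y t)
    (hdiff : ∀ t ∈ Set.Ioo t₀ T, DifferentiableAt ℝ y t)
    (hODI : ∀ t ∈ Set.Ioo t₀ T, deriv y t + a * y t ^ β ≤ b) :
    ∀ t ∈ Set.Ioo t₀ T,
      y t ≤ ((β - 1) * a * (t - t₀)) ^ (-(1 / (β - 1))) + (b / a) ^ (1 / β) := by
  intro s hs
  obtain ⟨hs1, hs2⟩ := hs
  set c : ℝ := (β - 1) * a with hc_def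
  set e : ℝ := -(1 / (β - 1)) with he_def
  set K : ℝ := (b / a) ^ (1 / β) with hK_def
  have hβ1 : 0 < β - 1 := by linarith
  have hc : 0 < c := mul_pos hβ1 ha
  have hK : 0 < K := Real.rpow_pos_of_pos (div_pos hb ha) _
  have he : e < 0 := by
    rw [he_def]; simp only [neg_neg, neg_lt, neg_zero]
    positivity
  have heβ : e * β = e - 1 := by
    rw [he_def]; field_simp; ring
  -- bound for y on [t₀, s]
  have hsub : Icc t₀ s ⊆ Ico t₀ T := fun x hx => ⟨hx.1, lt_of_le_of_lt hx.2 hs2⟩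
  obtain ⟨C, hC⟩ := isCompact_Icc.exists_bound_of_continuousOn (hcont.mono hsub)
  have hyC : ∀ x ∈ Icc t₀ s, y x ≤ C := fun x hx => by
    have := hC x hx; rw [Real.norm_eq_abs] at this
    exact (le_abs_self _).trans this
  have hC0 : 0 ≤ C := le_trans (hnn t₀ ⟨le_rfl, hT⟩) (hyC t₀ ⟨le_rfl, hs1.le⟩)
  -- choice of δ
  set δ : ℝ := min ((s - t₀) / 2) ((C + 1) ^ (-(β - 1)) / c) with hδ_def
  have hCpos : (0:ℝ) < (C + 1) ^ (-(β - 1)) := Real.rpow_pos_of_pos (by linarith) _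
  have hδpos : 0 < δ := lt_min (by linarith) (div_pos hCpos hc)
  have hδs : t₀ + δ ≤ s := by
    have : δ ≤ (s - t₀) / 2 := min_le_left _ _
    linarith
  have hδT : t₀ + δ < T := lt_of_le_of_lt hδs hs2
  have hcδ : 0 < c * δ := mul_pos hc hδpos
  have hδbig : C + 1 ≤ (c * δ) ^ e := by
    have h1 : c * δ ≤ (C + 1) ^ (-(β - 1)) := by
      have : δ ≤ (C + 1) ^ (-(β - 1)) / c := min_le_right _ _
      calc c * δ ≤ c * ((C + 1) ^ (-(β - 1)) / c) := by
            exact mul_le_mul_of_nonneg_left this hc.le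
        _ = (C + 1) ^ (-(β - 1)) := by field_simp
    have h2 : ((C + 1) ^ (-(β - 1))) ^ e ≤ (c * δ) ^ e :=
      Real.rpow_le_rpow_of_nonpos hcδ h1 he.le
    have h3 : ((C + 1) ^ (-(β - 1))) ^ e = C + 1 := by
      rw [← Real.rpow_mul (by linarith : (0:ℝ) ≤ C + 1)]
      rw [show -(β - 1) * e = 1 by rw [he_def]; field_simp]
      exact Real.rpow_one _
    linarith
  -- the barrier
  set B : ℝ → ℝ := fun t => (c * (t - t₀)) ^ e + K with hB_def
  set B' : ℝ → ℝ := fun t => c * e * (c * (t - t₀)) ^ (e - 1) with hB'_def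
  have hBderiv : ∀ x ∈ Icc (t₀ + δ) s, HasDerivAt B (B' x) x := by
    intro x hx
    have hux : 0 < c * (x - t₀) := mul_pos hc (by have := hx.1; linarith)
    have hlin : HasDerivAt (fun t => c * (t - t₀)) c x := by
      simpa using ((hasDerivAt_id x).sub_const t₀).const_mul c
    have := (hlin.rpow_const (p := e) (Or.inl hux.ne')).add_const K
    simpa [hB_def, hB'_def, mul_comm] using this
  have hIccsub : Icc (t₀ + δ) s ⊆ Ico t₀ T := fun x hx =>
    ⟨le_trans (by linarith) hx.1, lt_of_le_of_lt hx.2 hs2⟩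
  have hIcosub : ∀ x ∈ Ico (t₀ + δ) s, x ∈ Ioo t₀ T := fun x hx =>
    ⟨lt_of_lt_of_le (by linarith) hx.1, lt_trans hx.2 hs2⟩
  have hfcont : ContinuousOn y (Icc (t₀ + δ) s) := hcont.mono hIccsub
  have hf' : ∀ x ∈ Ico (t₀ + δ) s, HasDerivWithinAt y (deriv y x) (Ici x) x := fun x hx =>
    ((hdiff x (hIcosub x hx)).hasDerivAt).hasDerivWithinAt
  have hinit : y (t₀ + δ) ≤ B (t₀ + δ) := by
    have h1 : y (t₀ + δ) ≤ C := hyC _ ⟨by linarith, hδs⟩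
    have h2 : B (t₀ + δ) = (c * δ) ^ e + K := by rw [hB_def]; ring_nf
    rw [h2]; linarith
  have hBcont : ContinuousOn B (Icc (t₀ + δ) s) := fun x hx =>
    (hBderiv x hx).continuousAt.continuousWithinAt
  have hB'w : ∀ x ∈ Ico (t₀ + δ) s, HasDerivWithinAt B (B' x) (Ici x) x := fun x hx =>
    (hBderiv x (Ico_subset_Icc_self hx)).hasDerivWithinAt
  have hbound : ∀ x ∈ Ico (t₀ + δ) s, y x = B x → deriv y x < B' x := by
    intro x hx hcontact
    have hxIoo : x ∈ Ioo t₀ T := hIcosub x hx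
    set u : ℝ := c * (x - t₀) with hu_def
    have hu : 0 < u := mul_pos hc (by have := hx.1; linarith)
    have hue : 0 < u ^ e := Real.rpow_pos_of_pos hu _
    have hODIx : deriv y x ≤ b - a * (y x) ^ β := by
      have := hODI x hxIoo; linarith
    have hBx : y x = u ^ e + K := hcontact
    have hsup : (u ^ e) ^ β + K ^ β < (u ^ e + K) ^ β :=
      rpow_add_lt_of_one_lt hue hK hβ
    have hue2 : (u ^ e) ^ β = u ^ (e - 1) := by
      rw [← Real.rpow_mul hu.le, heβ]
    have hKβ : a * K ^ β = b := by
      rw [hK_def, ← Real.rpow_mul (le_of_lt (div_pos hb ha)),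
        one_div_mul_cancel (by linarith : β ≠ 0), Real.rpow_one]
      field_simp
    have hce : c * e = -a := by rw [hc_def, he_def]; field_simp
    have hB'x : B' x = -a * u ^ (e - 1) := by rw [hB'_def]; simp only [← hu_def, hce]
    have hstep : b - a * (y x) ^ β < B' x := by
      rw [hBx, hB'x]
      have : a * ((u ^ e) ^ β + K ^ β) < a * (u ^ e + K) ^ β :=
        mul_lt_mul_of_pos_left hsup ha
      rw [hue2] at this
      nlinarith
    exact lt_of_le_of_lt hODIx hstep
  have main :=
    image_le_of_deriv_right_lt_deriv_boundary' hfcont hf' hinit hBcont hB'w hbound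
  have := main ⟨hδs, le_rfl⟩
  simpa [hB_def] using this
end
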